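/- Let k be a field of characteristic 0 and F ∈ k[X_0,…,X_n] homogeneous of degree m ≥ 2. Let M be the (n+2)×(n+2) matrix with first row (F, Y_0F_0, …, Y_0F_n) and (i+2)-nd row (X_iF_i, Y_0X_iF_{i0}, …, Y_0(F_i + X_iF_{ii}), …, Y_0X_iF_{in}) for 0 ≤ i ≤ n (the diagonal entry in column i+2 being Y_0(F_i + X_iF_{ii})). Then in the ring J̃ = k[Y_0,X_0,…,X_n]/(Y_0F, Y_0X_0F_0,…,Y_0X_nF_n), the minor det(M_{0|0}) (delete row 0 and column 0) equals Y_0^{n+1}·(m^{n+1}/(m−1)^{n+1})·det(Hess(F))·∏_{i=0}^n X_i. -/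

import Mathlib

open MvPolynomial

namespace HessianRing

variable {k : Type*} [Field k]

/-- The variable `Y_0`. -/
noncomputable def Y0 (n : ℕ) (k : Type*) [Field k] :
    MvPolynomial (Unit ⊕ Fin (n + 1)) k := X (Sum.inl ())

/-- The variable `X_j`. -/
noncomputable def Xb (n : ℕ) (k : Type*) [Field k] (j : Fin (n + 1)) :
    MvPolynomial (Unit ⊕ Fin (n + 1)) k := X (Sum.inr j)

/-- The inclusion `k[X_0,…,X_n] → k[Y_0,X_0,…,X_n]`. -/
noncomputable def ρ (n : ℕ) (k : Type*) [Field k] :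
    MvPolynomial (Fin (n + 1)) k →ₐ[k] MvPolynomial (Unit ⊕ Fin (n + 1)) k :=
  rename Sum.inr

/-- The ideal `(Y_0F, Y_0X_0F_0, …, Y_0X_nF_n)` defining
`J̃ = k[Y_0,X_0,…,X_n]/(Y_0F, Y_0X_0F_0,…,Y_0X_nF_n)`. -/
noncomputable def JtildeIdeal (n : ℕ) {k : Type*} [Field k]
    (F : MvPolynomial (Fin (n + 1)) k) : Ideal (MvPolynomial (Unit ⊕ Fin (n + 1)) k) :=
  Ideal.span ({Y0 n k * ρ n k F} ∪
    Set.range (fun i : Fin (n + 1) => Y0 n k * Xb n k i * ρ n k (pderiv i F)))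

/-- The Hessian matrix `(∂²F/∂X_i∂X_j)` of `F`. -/
noncomputable def hess (n : ℕ) {k : Type*} [Field k] (F : MvPolynomial (Fin (n + 1)) k) :
    Matrix (Fin (n + 1)) (Fin (n + 1)) (MvPolynomial (Fin (n + 1)) k) :=
  Matrix.of fun i j => pderiv j (pderiv i F)

/-! Write the `i`-th row of `Y_0·(diag(F_i) + diag(X_i)·Hess F)` as `Y_0F_ie_i + Y_0X_iH_i`
and expand the determinant multilinearly into `2^{n+1}` terms, indexed by the set `s` of rows
taking the first summand. By Euler's identity `H·X = (m-1)·∇F`, modulo the `Y_0X_jF_j`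
both kinds of row are orthogonal to `X`, while `Y_0H_a·X = (m-1)Y_0F_a`. So Cramer's rule for
the vector `X` trades a row `Y_0X_aH_a` for `(m-1)` times the row `Y_0F_ae_a`: the term of `s` is
`(m-1)^{-|s|}` times the term of `∅`, which is `Y_0^{n+1}·∏X_i·det(Hess F)`, and the binomial
theorem sums the factors to `(1 + 1/(m-1))^{n+1}`. -/

open Matrix

section SplitRows

variable {ι R : Type*} [DecidableEq ι] [CommRing R]

variable (y : R) (x f : ι → R) (H : Matrix ι ι R) in
def splitRows (s : Finset ι) : Matrix ι ι R :=
  s.piecewise (fun i => (y * f i) • Pi.single i 1) (fun i => (y * x i) • H i)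

variable {y c : R} {x f : ι → R} {H : Matrix ι ι R}

theorem splitRows_insert (s : Finset ι) (a : ι) :
    splitRows y x f H (insert a s) =
      (splitRows y x f H s).updateRow a ((y * f a) • Pi.single a 1) :=
  Finset.piecewise_insert s _ _ a

theorem splitRows_of_notMem {s : Finset ι} {i : ι} (hi : i ∉ s) :
    splitRows y x f H s i = (y * x i) • H i :=
  Finset.piecewise_eq_of_notMem _ _ _ hi

variable [Fintype ι]

theorem _root_.Matrix.det_mul_apply_of_mulVec_eq_single {M : Matrix ι ι R} {v : ι → R} {a : ι}
    {w : R} (h : M *ᵥ v = Pi.single a w) :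
    M.det * v a = w * (M.updateRow a (Pi.single a 1)).det := by
  have hcramer : cramer M (M *ᵥ v) = M.det • v := by
    rw [cramer_eq_adjugate_mulVec, mulVec_mulVec, adjugate_mul, smul_mulVec, one_mulVec]
  calc M.det * v a = cramer M (Pi.single a w) a := by rw [← h, hcramer]; rfl
    _ = w * (M.updateRow a (Pi.single a 1)).det := by
      rw [cramer_eq_adjugate_mulVec, mulVec_single, ← adjugate_apply]
      simp [mul_comm]

theorem updateRow_splitRows_mulVec (hEuler : H *ᵥ x = c • f) (hann : ∀ i, y * x i * f i = 0)
    (s : Finset ι) (a : ι) :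
    (splitRows y x f H s).updateRow a (y • H a) *ᵥ x = Pi.single a (y * (c * f a)) := by
  have hrow : ∀ i, H i ⬝ᵥ x = c * f i := fun i => congrFun hEuler i
  funext j
  change updateRow _ a _ j ⬝ᵥ x = _
  rcases eq_or_ne j a with rfl | hj
  · rw [updateRow_self, smul_dotProduct, hrow, Pi.single_eq_same, smul_eq_mul]
  · rw [updateRow_ne hj, Pi.single_eq_of_ne hj]
    by_cases hjs : j ∈ s
    · simp only [splitRows, Finset.piecewise_eq_of_mem _ _ _ hjs, smul_dotProduct,
        single_dotProduct, one_mul, smul_eq_mul]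
      linear_combination hann j
    · rw [splitRows_of_notMem hjs, smul_dotProduct, hrow, smul_eq_mul]
      linear_combination c * hann j

theorem det_splitRows_eq_mul_det_splitRows_insert (hEuler : H *ᵥ x = c • f)
    (hann : ∀ i, y * x i * f i = 0) {s : Finset ι} {a : ι} (ha : a ∉ s) :
    (splitRows y x f H s).det = c * (splitRows y x f H (insert a s)).det := by
  let N := splitRows y x f H s
  calc N.det = ((N.updateRow a (y • H a)).updateRow a (x a • y • H a)).det := by
        rw [updateRow_idem, smul_smul, mul_comm, ← splitRows_of_notMem ha, updateRow_eq_self]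
    _ = (N.updateRow a (y • H a)).det * x a := by
        rw [det_updateRow_smul, updateRow_idem, mul_comm]
    _ = y * (c * f a) * (N.updateRow a (Pi.single a 1)).det := by
        rw [det_mul_apply_of_mulVec_eq_single (updateRow_splitRows_mulVec hEuler hann s a),
          updateRow_idem]
    _ = c * (splitRows y x f H (insert a s)).det := by
        rw [splitRows_insert, det_updateRow_smul]; ring

theorem pow_card_mul_det_splitRows (hEuler : H *ᵥ x = c • f) (hann : ∀ i, y * x i * f i = 0)
    (s : Finset ι) : c ^ s.card * (splitRows y x f H s).det = (splitRows y x f H ∅).det := by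
  induction s using Finset.induction_on with
  | empty => simp
  | insert a s ha ih =>
    rw [← ih, det_splitRows_eq_mul_det_splitRows_insert hEuler hann ha,
      Finset.card_insert_of_notMem ha]
    ring

theorem det_smul_diagonal_add_eq_sum_det_splitRows :
    (y • (diagonal f + diagonal x * H)).det = ∑ s : Finset ι, (splitRows y x f H s).det := by
  have hrows : y • (diagonal f + diagonal x * H) =
      (fun i => (y * f i) • Pi.single i 1) + (fun i => (y * x i) • H i) := by
    ext i j
    change y * (diagonal f i j + (diagonal x * H) i j) =
      (y * f i) • (Pi.single i 1 : ι → R) j + (y * x i) • H i j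
    rcases eq_or_ne i j with rfl | hij
    · simp [mul_add, mul_assoc]
    · simp [hij, Ne.symm hij, mul_assoc]
  rw [hrows]
  exact detRowAlternating.map_add_univ _ _

theorem det_splitRows_empty :
    (splitRows y x f H ∅).det = y ^ Fintype.card ι * (∏ i, x i) * H.det := by
  have hempty : splitRows y x f H ∅ = of fun i j => (y * x i) * H i j := by
    ext i j; simp [splitRows]
  rw [hempty, det_mul_column, Finset.prod_mul_distrib, Finset.prod_const, Finset.card_univ]

theorem pow_card_mul_det_smul_diagonal_add (hEuler : H *ᵥ x = c • f)
    (hann : ∀ i, y * x i * f i = 0) :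
    c ^ Fintype.card ι * (y • (diagonal f + diagonal x * H)).det =
      (c + 1) ^ Fintype.card ι * y ^ Fintype.card ι * H.det * ∏ i, x i := by
  have hterm : ∀ s : Finset ι, c ^ Fintype.card ι * (splitRows y x f H s).det =
      c ^ sᶜ.card * (splitRows y x f H ∅).det := fun s => by
    rw [← pow_card_mul_det_splitRows hEuler hann s, ← mul_assoc, ← pow_add,
      Finset.card_compl_add_card]
  have hbinom : ∑ s : Finset ι, c ^ sᶜ.card = (c + 1) ^ Fintype.card ι := by
    simpa [Finset.card_compl, add_comm] using Fintype.sum_pow_mul_eq_add_pow ι 1 c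
  rw [det_smul_diagonal_add_eq_sum_det_splitRows, Finset.mul_sum,
    Finset.sum_congr rfl fun s _ => hterm s, ← Finset.sum_mul, det_splitRows_empty, hbinom]
  ring

end SplitRows

theorem hess_mulVec_X {n m : ℕ} {F : MvPolynomial (Fin (n + 1)) k} (hhom : F.IsHomogeneous m) :
    hess n F *ᵥ X = (m - 1 : ℕ) • fun i => pderiv i F := by
  funext i
  simp only [mulVec, dotProduct, hess, of_apply, Pi.smul_apply, mul_comm _ (X _)]
  exact hhom.pderiv.sum_X_mul_pderiv

theorem map_hess_mulVec_map_X {n m : ℕ} (hm : 1 ≤ m) {F : MvPolynomial (Fin (n + 1)) k}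
    (hhom : F.IsHomogeneous m) {Q : Type*} [CommRing Q] [Algebra k Q]
    (φ : MvPolynomial (Fin (n + 1)) k →ₐ[k] Q) :
    (hess n F).map φ *ᵥ (fun i => φ (X i)) =
      algebraMap k Q ((m : k) - 1) • fun i => φ (pderiv i F) := by
  funext i
  have hmap := φ.toRingHom.map_mulVec (hess n F) X i
  rw [hess_mulVec_X hhom] at hmap
  refine hmap.symm.trans ?_
  simp [Algebra.smul_def, Nat.cast_sub hm]

theorem map_det_eq_of_map_Y0_mul_Xb_mul_pderiv_eq_zero {n m : ℕ} [CharZero k] (hm : 2 ≤ m)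
    {F : MvPolynomial (Fin (n + 1)) k} (hhom : F.IsHomogeneous m)
    {A : Matrix (Fin (n + 1)) (Fin (n + 1)) (MvPolynomial (Unit ⊕ Fin (n + 1)) k)}
    (hA : ∀ i j, A i j = Y0 n k * (Xb n k i * ρ n k (pderiv j (pderiv i F)) +
      if i = j then ρ n k (pderiv i F) else 0))
    {Q : Type*} [CommRing Q] [Algebra k Q] (π : MvPolynomial (Unit ⊕ Fin (n + 1)) k →ₐ[k] Q)
    (hπ : ∀ i, π (Y0 n k * Xb n k i * ρ n k (pderiv i F)) = 0) :
    π A.det = π (C ((m : k) ^ (n + 1) * (((m : k) - 1)⁻¹) ^ (n + 1)) * Y0 n k ^ (n + 1) *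
      ρ n k (hess n F).det * ∏ i, Xb n k i) := by
  let φ := π.comp (ρ n k)
  have hEuler := map_hess_mulVec_map_X (by omega) hhom φ
  have hXb : ∀ i, π (Xb n k i) = φ (X i) := fun i => by simp [φ, ρ, Xb]
  have hann : ∀ i, π (Y0 n k) * φ (X i) * φ (pderiv i F) = 0 := fun i => by
    rw [← hXb, ← map_mul]
    exact (map_mul π _ _).symm.trans (hπ i)
  have hAmap : π.mapMatrix A = π (Y0 n k) • (diagonal (fun i => φ (pderiv i F)) +
      diagonal (fun i => φ (X i)) * (hess n F).map φ) := by
    ext i j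
    rcases eq_or_ne i j with rfl | hij
    · simp [hA, hess, φ, ρ, Xb, mul_add, add_comm]
    · simp [hA, hess, φ, ρ, Xb, hij]
  have key := pow_card_mul_det_smul_diagonal_add hEuler hann
  have hc : algebraMap k Q ((m : k) - 1) + 1 = algebraMap k Q (m : k) := by
    rw [map_sub, map_one, sub_add_cancel]
  rw [← hAmap, ← AlgHom.map_det, Fintype.card_fin, hc] at key
  have hinv : algebraMap k Q ((m : k) - 1)⁻¹ * algebraMap k Q ((m : k) - 1) = 1 := by
    rw [← map_mul, inv_mul_cancel₀ (sub_ne_zero.mpr (by exact_mod_cast (by omega : m ≠ 1))),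
      map_one]
  have hdet : π (ρ n k (hess n F).det) = ((hess n F).map φ).det := φ.map_det _
  rw [map_mul, map_mul, map_mul, map_pow, hdet, map_prod, algHom_C, map_mul, map_pow,
    map_pow, ← one_mul (π A.det), ← one_pow (n + 1), ← hinv, mul_pow, mul_assoc, key]
  simp only [hXb]
  ring

/-- In `J̃ = k[Y_0,X_0,…,X_n]/(Y_0F, Y_0X_0F_0,…,Y_0X_nF_n)` (char 0, `F` homogeneous of
degree `m ≥ 2`), the minor `det(M_{0|0})`, i.e. the determinant of the matrix with entries
`A_{ij} = Y_0·(X_iF_{ij} + δ_{ij}F_i)`, equals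
`Y_0^{n+1}·(m^{n+1}/(m−1)^{n+1})·det(Hess(F))·∏_i X_i`. -/
theorem minor_det_eq_hessian (n m : ℕ) [CharZero k] (hm : 2 ≤ m)
    (F : MvPolynomial (Fin (n + 1)) k) (hhom : F.IsHomogeneous m)
    (A : Matrix (Fin (n + 1)) (Fin (n + 1)) (MvPolynomial (Unit ⊕ Fin (n + 1)) k))
    (hA : ∀ i j, A i j = Y0 n k * (Xb n k i * ρ n k (pderiv j (pderiv i F)) +
      if i = j then ρ n k (pderiv i F) else 0)) :
    Ideal.Quotient.mk (JtildeIdeal n F) A.det =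
      Ideal.Quotient.mk (JtildeIdeal n F)
        (C ((m : k) ^ (n + 1) * (((m : k) - 1)⁻¹) ^ (n + 1)) * Y0 n k ^ (n + 1) *
          ρ n k (hess n F).det * ∏ i, Xb n k i) := by
  rw [← Ideal.Quotient.mkₐ_eq_mk k]
  refine map_det_eq_of_map_Y0_mul_Xb_mul_pderiv_eq_zero hm hhom hA _ fun i => ?_
  rw [Ideal.Quotient.mkₐ_eq_mk, Ideal.Quotient.eq_zero_iff_mem]
  exact Ideal.subset_span (Set.mem_union_right _ ⟨i, rfl⟩)

end HessianRing
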